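/- arXiv:2410.07729 — 4 statements merged into one kernel-verified Lean document; each statement's English description precedes it below -/
import Mathlib

section
/- Let n ≥ 2 be an even integer, c > 0 a real number, and let k be an integer with 1 ≤ k ≤ n/2 - 1. Then the function y : ℂ → ℂ defined by y(x) = ∫₀^∞ e^{-c^{n-1} w^n/n} ( e^{iπ/n} e^{-c w x e^{iπ/n}} - e^{-c w x a_k} cos(c w x b_k - (2k+1)π/n) ) dw satisfies the ordinary differential equation y^{(n-1)}(x) + c·x·y(x) = 0 for every x ∈ ℂ. -/
/-!
Splitting the cosine into exponentials writes `y` as `y_β - (y_γ + y_δ) / 2`, where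
`y_α(x) = α ∫₀^∞ exp (-c^{n-1} w^n / n - c α w x) dw` and `α` runs over `β = e^{iπ/n}`,
`γ, δ = e^{±i(2k+1)π/n}`; since `n` is even, each satisfies `(-α)^n = -1`.
Differentiating under the integral sign, `y_α^{(n-1)}(x) = α (-c α)^{n-1} ∫ w^{n-1} exp (…) dw
= c^{n-1} ∫ w^{n-1} exp (…) dw`, and integrating `d/dw exp (…)` over `(0, ∞)` gives
`y_α^{(n-1)} + c x y_α = 1`. The three right-hand sides cancel in `y`.
-/

open MeasureTheory Real Set Filter Topology

lemma exists_mul_le_add_mul_pow {n : ℕ} (hn : 2 ≤ n) {A : ℝ} (hA : 0 < A) (s : ℝ) :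
    ∃ B, ∀ w : ℝ, 0 ≤ w → s * w ≤ B + A * w ^ n := by
  refine ⟨|s| + s ^ 2 / (4 * A), fun w hw => ?_⟩
  rcases le_total w 1 with hw1 | hw1
  · have : s * w ≤ |s| := by nlinarith [le_abs_self s, abs_nonneg s]
    have : 0 ≤ s ^ 2 / (4 * A) + A * w ^ n := by positivity
    linarith
  · have hpow : w ^ 2 ≤ w ^ n := pow_le_pow_right₀ hw1 hn
    have hamgm : s * w ≤ s ^ 2 / (4 * A) + A * w ^ 2 := by
      rw [div_add' _ _ _ (by positivity), le_div_iff₀ (by positivity)]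
      nlinarith [sq_nonneg (2 * A * w - s)]
    nlinarith [abs_nonneg s]

lemma exists_neg_mul_pow_add_mul_le {n : ℕ} (hn : 2 ≤ n) {A : ℝ} (hA : 0 < A) (s : ℝ) :
    ∃ B, ∀ w : ℝ, 0 ≤ w → -A * w ^ n + s * w ≤ B + -(A / 2) * w ^ n := by
  obtain ⟨B, hB⟩ := exists_mul_le_add_mul_pow hn (half_pos hA) s
  exact ⟨B, fun w hw => by linarith [hB w hw]⟩

lemma integrableOn_pow_mul_exp_neg_mul_pow_add {n : ℕ} (hn : 2 ≤ n) {A : ℝ} (hA : 0 < A)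
    (j : ℕ) (s : ℝ) :
    IntegrableOn (fun w : ℝ => w ^ j * exp (-A * w ^ n + s * w)) (Ioi 0) := by
  obtain ⟨B, hB⟩ := exists_neg_mul_pow_add_mul_le hn hA s
  have hdom : IntegrableOn (fun w : ℝ => exp B * (w ^ (j : ℝ) * exp (-(A / 2) * w ^ (n : ℝ))))
      (Ioi 0) :=
    (integrableOn_rpow_mul_exp_neg_mul_rpow (by linarith [j.cast_nonneg (α := ℝ)])
      (by positivity) (half_pos hA)).const_mul _
  refine hdom.mono' (by fun_prop)
    ((ae_restrict_iff' measurableSet_Ioi).2 (.of_forall fun w (hw : 0 < w) => ?_))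
  rw [rpow_natCast, rpow_natCast, norm_of_nonneg (by positivity), mul_left_comm, ← exp_add]
  exact mul_le_mul_of_nonneg_left (exp_le_exp.2 (hB w hw.le)) (by positivity)

lemma tendsto_exp_neg_mul_pow_add_atTop {n : ℕ} (hn : 2 ≤ n) {A : ℝ} (hA : 0 < A) (s : ℝ) :
    Tendsto (fun w : ℝ => exp (-A * w ^ n + s * w)) atTop (𝓝 0) := by
  obtain ⟨B, hB⟩ := exists_neg_mul_pow_add_mul_le hn hA s
  have hdom : Tendsto (fun w : ℝ => B + -(A / 2) * w ^ n) atTop atBot :=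
    tendsto_atBot_add_const_left _ B <|
      (tendsto_pow_atTop (by omega)).const_mul_atTop_of_neg (by linarith)
  exact tendsto_exp_atBot.comp (tendsto_atBot_mono' _ ((eventually_ge_atTop 0).mono hB) hdom)

noncomputable def momentKernel (n : ℕ) (a b : ℂ) (j : ℕ) (x : ℂ) (w : ℝ) : ℂ :=
  (-b * w) ^ j * Complex.exp (-a * w ^ n - b * w * x)

noncomputable def momentIntegral (n : ℕ) (a b : ℂ) (j : ℕ) (x : ℂ) : ℂ :=
  ∫ w in Ioi 0, momentKernel n a b j x w

section momentIntegral

variable {n : ℕ} {a b : ℂ}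

lemma continuous_momentKernel (j : ℕ) (x : ℂ) : Continuous (momentKernel n a b j x) := by
  unfold momentKernel; fun_prop

lemma norm_momentKernel_le (j : ℕ) {x : ℂ} {R : ℝ} (hx : ‖x‖ ≤ R) {w : ℝ} (hw : 0 ≤ w) :
    ‖momentKernel n a b j x w‖ ≤ ‖b‖ ^ j * (w ^ j * exp (-a.re * w ^ n + ‖b‖ * R * w)) := by
  rw [momentKernel, norm_mul, norm_pow, norm_mul, norm_neg, Complex.norm_real, norm_of_nonneg hw,
    Complex.norm_exp, mul_pow, mul_assoc]
  have hre : (-a * w ^ n - b * w * x).re = -a.re * w ^ n - (b * w * x).re := by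
    simp [← Complex.ofReal_pow]
  have hbwx : -(b * w * x).re ≤ ‖b‖ * R * w := by
    calc -(b * w * x).re ≤ ‖b * w * x‖ := (neg_le_abs _).trans (Complex.abs_re_le_norm _)
      _ = ‖b‖ * ‖x‖ * w := by simp [norm_of_nonneg hw]; ring
      _ ≤ ‖b‖ * R * w := by gcongr
  gcongr
  rw [hre]
  linarith

lemma integrableOn_momentKernel (hn : 2 ≤ n) (ha : 0 < a.re) (j : ℕ) (x : ℂ) :
    IntegrableOn (momentKernel n a b j x) (Ioi 0) := by
  refine ((integrableOn_pow_mul_exp_neg_mul_pow_add hn ha j (‖b‖ * ‖x‖)).const_mul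
    (‖b‖ ^ j)).mono' (continuous_momentKernel j x).aestronglyMeasurable.restrict
    ((ae_restrict_iff' measurableSet_Ioi).2 (.of_forall fun w (hw : 0 < w) => ?_))
  exact norm_momentKernel_le j le_rfl hw.le

lemma hasDerivAt_momentKernel (j : ℕ) (w : ℝ) (x : ℂ) :
    HasDerivAt (momentKernel n a b j · w) (momentKernel n a b (j + 1) x w) x := by
  have hexp : HasDerivAt (fun x => Complex.exp (-a * w ^ n - b * w * x))
      (Complex.exp (-a * w ^ n - b * w * x) * (-b * w)) x := by
    simpa using (((hasDerivAt_id x).const_mul (b * w)).const_sub (-a * w ^ n)).cexp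
  exact (hexp.const_mul ((-b * w) ^ j)).congr_deriv (by simp only [momentKernel, pow_succ]; ring)

lemma hasDerivAt_momentIntegral (hn : 2 ≤ n) (ha : 0 < a.re) (j : ℕ) (x : ℂ) :
    HasDerivAt (momentIntegral n a b j) (momentIntegral n a b (j + 1) x) x := by
  have hbound := (integrableOn_pow_mul_exp_neg_mul_pow_add hn ha (j + 1)
    (‖b‖ * (‖x‖ + 1))).const_mul (‖b‖ ^ (j + 1))
  refine (hasDerivAt_integral_of_dominated_loc_of_deriv_le (Metric.ball_mem_nhds x one_pos)
    (.of_forall fun x' => (continuous_momentKernel j x').aestronglyMeasurable.restrict)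
    (integrableOn_momentKernel hn ha j x)
    (continuous_momentKernel (j + 1) x).aestronglyMeasurable.restrict ?_ hbound
    (.of_forall fun w x' _ => hasDerivAt_momentKernel j w x')).2
  refine (ae_restrict_iff' measurableSet_Ioi).2 (.of_forall fun w (hw : 0 < w) x' hx' => ?_)
  have hx'R : ‖x'‖ ≤ ‖x‖ + 1 := by
    linarith [norm_le_norm_add_norm_sub' x' x, (mem_ball_iff_norm.1 hx').le]
  exact norm_momentKernel_le (j + 1) hx'R hw.le

lemma differentiable_momentIntegral (hn : 2 ≤ n) (ha : 0 < a.re) (j : ℕ) :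
    Differentiable ℂ (momentIntegral n a b j) :=
  fun x => (hasDerivAt_momentIntegral hn ha j x).differentiableAt

lemma iteratedDeriv_momentIntegral (hn : 2 ≤ n) (ha : 0 < a.re) (m j : ℕ) :
    iteratedDeriv m (momentIntegral n a b j) = momentIntegral n a b (j + m) := by
  induction m generalizing j with
  | zero => rfl
  | succ m ih =>
    have hderiv : deriv (momentIntegral n a b j) = momentIntegral n a b (j + 1) :=
      funext fun x => (hasDerivAt_momentIntegral hn ha j x).deriv
    rw [iteratedDeriv_succ', hderiv, ih, add_right_comm, add_assoc]

lemma momentIntegral_ode (hn : 2 ≤ n) (ha : 0 < a.re) {κ : ℂ} (hκ : κ * (-b) ^ (n - 1) = n * a)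
    (x : ℂ) : κ * momentIntegral n a b (n - 1) x + b * x * momentIntegral n a b 0 x = 1 := by
  set E : ℝ → ℂ := fun w => Complex.exp (-a * w ^ n - b * w * x)
  have hE : ∀ w, E w = momentKernel n a b 0 x w := fun w => by simp [E, momentKernel]
  have hderiv : ∀ w : ℝ, HasDerivAt E
      (-(κ * momentKernel n a b (n - 1) x w + b * x * momentKernel n a b 0 x w)) w := by
    intro w
    have hpoly : HasDerivAt (fun z : ℂ => -a * z ^ n - b * z * x)
        (-a * (n * w ^ (n - 1)) - b * x) w :=
      (((hasDerivAt_pow n (w : ℂ)).const_mul (-a)).sub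
        (((hasDerivAt_id (w : ℂ)).const_mul b).mul_const x)).congr_deriv (by simp)
    refine hpoly.cexp.comp_ofReal.congr_deriv ?_
    simp only [momentKernel, mul_pow, pow_zero, one_mul]
    linear_combination ((w : ℂ) ^ (n - 1) * Complex.exp (-a * w ^ n - b * w * x)) * hκ
  have htendsto : Tendsto E atTop (𝓝 0) := by
    refine squeeze_zero_norm' ?_ (tendsto_exp_neg_mul_pow_add_atTop hn ha (‖b‖ * ‖x‖))
    filter_upwards [eventually_ge_atTop 0] with w hw
    simpa [hE] using norm_momentKernel_le (n := n) (a := a) (b := b) 0 le_rfl hw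
  have hK₁ := (integrableOn_momentKernel (b := b) hn ha (n - 1) x).const_mul κ
  have hK₀ := (integrableOn_momentKernel (b := b) hn ha 0 x).const_mul (b * x)
  have hftc := integral_Ioi_of_hasDerivAt_of_tendsto ((continuous_momentKernel 0 x).congr
    (fun w => (hE w).symm)).continuousWithinAt (fun w _ => hderiv w) (hK₁.add hK₀).neg htendsto
  rw [integral_neg, integral_add hK₁ hK₀, integral_const_mul, integral_const_mul] at hftc
  simp only [E, Complex.ofReal_zero, zero_pow (by omega : n ≠ 0), mul_zero, zero_mul, sub_zero,
    Complex.exp_zero] at hftc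
  simp only [momentIntegral]
  linear_combination -hftc

end momentIntegral

lemma exp_neg_mul_cos_mul_cos_sub (z t : ℂ) :
    Complex.exp (-z * Complex.cos t) * Complex.cos (z * Complex.sin t - t) =
      (Complex.exp (t * Complex.I) * Complex.exp (-z * Complex.exp (t * Complex.I)) +
        Complex.exp (-(t * Complex.I)) * Complex.exp (-z * Complex.exp (-(t * Complex.I)))) / 2 := by
  have he : Complex.exp (t * Complex.I) = Complex.cos t + Complex.sin t * Complex.I :=
    Complex.exp_mul_I t
  have he' : Complex.exp (-(t * Complex.I)) = Complex.cos t - Complex.sin t * Complex.I := by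
    rw [← neg_mul, Complex.exp_mul_I, Complex.cos_neg, Complex.sin_neg]; ring
  rw [Complex.cos.eq_1 (z * Complex.sin t - t), mul_div_assoc', mul_add, ← Complex.exp_add,
    ← Complex.exp_add, ← Complex.exp_add, ← Complex.exp_add, he, he']
  ring_nf

lemma cexp_int_mul_pi_mul_I_div_pow_of_odd {n : ℕ} (hn : n ≠ 0) {m : ℤ} (hm : Odd m) :
    Complex.exp (m * π * Complex.I / n) ^ n = -1 := by
  rw [← Complex.exp_nat_mul, show (n : ℂ) * (m * π * Complex.I / n) = m * (π * Complex.I) by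
    field_simp, Complex.exp_int_mul, Complex.exp_pi_mul_I, hm.neg_one_zpow]

lemma ofReal_pow_div_natCast_re_pos {c : ℝ} (hc : 0 < c) (m : ℕ) {n : ℕ} (hn : n ≠ 0) :
    0 < ((c : ℂ) ^ m / n).re := by
  rw [show (c : ℂ) ^ m / n = ((c ^ m / n : ℝ) : ℂ) by push_cast; rfl, Complex.ofReal_re]
  have : (0 : ℝ) < n := by exact_mod_cast Nat.pos_of_ne_zero hn
  positivity

noncomputable def airyMode (n : ℕ) (c : ℝ) (β x : ℂ) : ℂ :=
  β * momentIntegral n ((c : ℂ) ^ (n - 1) / n) (c * β) 0 x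

section airyMode

variable {n : ℕ} {c : ℝ}

lemma contDiff_airyMode (hn : 2 ≤ n) (hc : 0 < c) (β : ℂ) {N : WithTop ℕ∞} :
    ContDiff ℂ N (airyMode n c β) :=
  ((differentiable_momentIntegral hn (ofReal_pow_div_natCast_re_pos hc _ (by omega)) 0).const_mul
    β).contDiff

lemma airyMode_ode (hn : 2 ≤ n) (hc : 0 < c) {β : ℂ} (hβ : (-β) ^ n = -1) (x : ℂ) :
    iteratedDeriv (n - 1) (airyMode n c β) x + c * x * airyMode n c β x = 1 := by
  have hn0 : (n : ℂ) ≠ 0 := Nat.cast_ne_zero.2 (by omega)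
  have hβ' : β * (-β) ^ (n - 1) = 1 := by
    rw [← Nat.sub_add_cancel (by omega : 1 ≤ n), pow_succ] at hβ
    linear_combination -hβ
  have hκ : β * (-(c * β)) ^ (n - 1) = n * ((c : ℂ) ^ (n - 1) / n) := by
    rw [neg_mul_eq_mul_neg, mul_pow, mul_left_comm, hβ', mul_one]
    field_simp
  have hode := momentIntegral_ode hn (ofReal_pow_div_natCast_re_pos hc _ (by omega)) hκ x
  rw [show airyMode n c β = (β * momentIntegral n _ _ 0 ·) from rfl, iteratedDeriv_const_mul_field,
    iteratedDeriv_momentIntegral hn (ofReal_pow_div_natCast_re_pos hc _ (by omega)), zero_add]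
  linear_combination hode

lemma integral_eq_airyMode_sub (hn : 2 ≤ n) (hc : 0 < c) (β : ℂ) (t : ℝ) (x : ℂ) :
    ∫ w in Ioi (0 : ℝ), Complex.exp (-(c : ℂ) ^ (n - 1) * (w : ℂ) ^ n / n) *
        (β * Complex.exp (-(c : ℂ) * w * x * β)
          - Complex.exp (-(c : ℂ) * w * x * (Real.cos t : ℝ)) *
            Complex.cos ((c : ℂ) * w * x * (Real.sin t : ℝ) - (t : ℝ))) =
      airyMode n c β x -
        (airyMode n c (Complex.exp (t * Complex.I)) x +
          airyMode n c (Complex.exp (-(t * Complex.I))) x) / 2 := by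
  have ha := ofReal_pow_div_natCast_re_pos hc (n - 1) (by omega : n ≠ 0)
  set γ := Complex.exp (t * Complex.I)
  set δ := Complex.exp (-(t * Complex.I))
  set K : ℂ → ℝ → ℂ := fun α => momentKernel n ((c : ℂ) ^ (n - 1) / n) (c * α) 0 x
  have hK : ∀ (α : ℂ) (w : ℝ), K α w =
      Complex.exp (-(c : ℂ) ^ (n - 1) * (w : ℂ) ^ n / n) * Complex.exp (-(c * w * x) * α) := by
    intro α w
    simp only [K, momentKernel, pow_zero, one_mul, sub_eq_add_neg, Complex.exp_add]
    congr 2 <;> ring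
  have hpt : ∀ w : ℝ, Complex.exp (-(c : ℂ) ^ (n - 1) * (w : ℂ) ^ n / n) *
        (β * Complex.exp (-(c : ℂ) * w * x * β)
          - Complex.exp (-(c : ℂ) * w * x * (Real.cos t : ℝ)) *
            Complex.cos ((c : ℂ) * w * x * (Real.sin t : ℝ) - (t : ℝ))) =
      β * K β w - (γ * K γ w + δ * K δ w) / 2 := by
    intro w
    rw [Complex.ofReal_cos, Complex.ofReal_sin, hK, hK, hK,
      show -(c : ℂ) * w * x * Complex.cos t = -(c * w * x) * Complex.cos t by ring,
      show -(c : ℂ) * w * x * β = -(c * w * x) * β by ring, exp_neg_mul_cos_mul_cos_sub]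
    ring
  have hI (α : ℂ) : IntegrableOn (K α) (Ioi 0) := integrableOn_momentKernel hn ha 0 x
  have hIγδ : IntegrableOn (fun w => (γ * K γ w + δ * K δ w) / 2) (Ioi 0) :=
    (((hI γ).const_mul γ).add ((hI δ).const_mul δ)).div_const 2
  simp_rw [hpt]
  rw [integral_sub ((hI β).const_mul β) hIγδ, integral_div,
    integral_add ((hI γ).const_mul γ) ((hI δ).const_mul δ), integral_const_mul,
    integral_const_mul, integral_const_mul]
  rfl

end airyMode

theorem airy_type_ode_y_plus_even_general
    (n : ℕ) (hn : 2 ≤ n) (hne : Even n) (c : ℝ) (hc : 0 < c)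
    (k : ℕ)
    (y : ℂ → ℂ)
    (hy : ∀ x : ℂ, y x =
      ∫ w in Ioi (0 : ℝ),
        Complex.exp (-(c : ℂ) ^ (n - 1) * (w : ℂ) ^ n / n) *
          (Complex.exp (Complex.I * π / n) *
              Complex.exp (-(c : ℂ) * w * x * Complex.exp (Complex.I * π / n))
            - Complex.exp (-(c : ℂ) * w * x * (Real.cos ((2 * k + 1) * π / n) : ℝ)) *
              Complex.cos ((c : ℂ) * w * x * (Real.sin ((2 * k + 1) * π / n) : ℝ)
                - ((2 * k + 1) * π / n : ℝ)))) :
    ∀ x : ℂ, iteratedDeriv (n - 1) y x + (c : ℂ) * x * y x = 0 := by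
  have hroot : ∀ m : ℤ, Odd m → (-Complex.exp (m * π * Complex.I / n)) ^ n = -1 := fun m hm => by
    rw [hne.neg_pow, cexp_int_mul_pi_mul_I_div_pow_of_odd (by omega) hm]
  set t : ℝ := (2 * k + 1) * π / n with ht
  have hβ : (-Complex.exp (Complex.I * π / n)) ^ n = -1 := by
    convert hroot 1 odd_one using 4; push_cast; ring
  have hγ : (-Complex.exp (t * Complex.I)) ^ n = -1 := by
    convert hroot (2 * k + 1) (odd_two_mul_add_one _) using 4; push_cast [ht]; ring
  have hδ : (-Complex.exp (-(t * Complex.I))) ^ n = -1 := by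
    convert hroot (-(2 * k + 1)) (odd_two_mul_add_one _).neg using 4; push_cast [ht]; ring
  have hy' : y = fun x => airyMode n c (Complex.exp (Complex.I * π / n)) x -
      (airyMode n c (Complex.exp (t * Complex.I)) x +
        airyMode n c (Complex.exp (-(t * Complex.I))) x) / 2 :=
    funext fun x => (hy x).trans (integral_eq_airyMode_sub hn hc _ t x)
  intro x
  have hsmooth := fun β : ℂ => (contDiff_airyMode hn hc β (N := n - 1)).contDiffAt (x := x)
  rw [hy', iteratedDeriv_fun_sub (hsmooth _) (((hsmooth _).add (hsmooth _)).div_const _),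
    iteratedDeriv_div_const, iteratedDeriv_fun_add (hsmooth _) (hsmooth _)]
  linear_combination airyMode_ode hn hc hβ x -
    (airyMode_ode hn hc hγ x + airyMode_ode hn hc hδ x) / 2

theorem airy_type_ode_y_plus_even
    (n : ℕ) (hn : 2 ≤ n) (hne : Even n) (c : ℝ) (hc : 0 < c)
    (k : ℕ) (hk1 : 1 ≤ k) (hk2 : k ≤ n / 2 - 1)
    (y : ℂ → ℂ)
    (hy : ∀ x : ℂ, y x =
      ∫ w in Ioi (0 : ℝ),
        Complex.exp (-(c : ℂ) ^ (n - 1) * (w : ℂ) ^ n / n) *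
          (Complex.exp (Complex.I * π / n) *
              Complex.exp (-(c : ℂ) * w * x * Complex.exp (Complex.I * π / n))
            - Complex.exp (-(c : ℂ) * w * x * (Real.cos ((2 * k + 1) * π / n) : ℝ)) *
              Complex.cos ((c : ℂ) * w * x * (Real.sin ((2 * k + 1) * π / n) : ℝ)
                - ((2 * k + 1) * π / n : ℝ)))) :
    ∀ x : ℂ, iteratedDeriv (n - 1) y x + (c : ℂ) * x * y x = 0 :=
  airy_type_ode_y_plus_even_general n hn hne c hc k y hy
end

section
/- Let n ≥ 2 be an even integer, c > 0 a real number, and let k be an integer with 0 ≤ k ≤ n/2 - 1. Then the function y : ℂ → ℂ defined by y(x) = -∫₀^∞ e^{-c^{n-1} w^n/n - c w x a_k} sin(c w x b_k - (2k+1)π/n) dw satisfies the ordinary differential equation y^{(n-1)}(x) + c·x·y(x) = 0 for every x ∈ ℂ. -/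
/-!
Put `θ = (2k+1)π/n` and `ε = e^{±iθ}`, so that `εⁿ = -1`. Splitting the sine into exponentials
writes `y = (H₊ - H₋)/(2i)` with `H_ε(x) = ε ∫₀^∞ exp(-c^{n-1} wⁿ/n - cεwx) dw`.
Differentiating `n - 1` times under the integral gives `H_ε^{(n-1)} = ε(-cε)^{n-1} ∫ w^{n-1} e^{…}`,
and since `-∂_w e^{…} = (c^{n-1} w^{n-1} + cεx) e^{…}` with `e^{…} = 1` at `w = 0`,
`c^{n-1} ∫ w^{n-1} e^{…} = 1 - cεx ∫ e^{…}`. For even `n`, `ε(-ε)^{n-1} = -εⁿ = 1`, so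
`H_ε^{(n-1)} + cxH_ε = 1` for both signs and the constants cancel in `y`.
-/

open MeasureTheory Real Set Filter Topology
open Complex (I)
open scoped Complex

lemma integrable_exp_neg_mul_sq_add_mul {a : ℝ} (ha : 0 < a) (b : ℝ) :
    Integrable fun w : ℝ => exp (-a * w ^ 2 + b * w) := by
  refine (((integrable_exp_neg_mul_sq ha).comp_sub_right (b / (2 * a))).const_mul
    (exp (b ^ 2 / (4 * a)))).congr (ae_of_all _ fun w => ?_)
  simp only [← exp_add]
  congr 1
  field_simp
  ring

lemma sq_le_one_add_pow {n : ℕ} (hn : 2 ≤ n) {w : ℝ} (hw : 0 ≤ w) : w ^ 2 ≤ 1 + w ^ n := by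
  rcases le_total w 1 with h | h
  · nlinarith [pow_le_one₀ hw h (n := 2), pow_nonneg hw n]
  · linarith [pow_le_pow_right₀ h hn]

lemma mul_neg_pow_sub_one_of_pow_eq_neg_one {n : ℕ} (hn : Even n) {ε : ℂ}
    (hε : ε ^ n = -1) : ε * (-ε) ^ (n - 1) = 1 := by
  have hn0 : n ≠ 0 := by rintro rfl; norm_num at hε
  obtain ⟨m, rfl⟩ : ∃ m, n = m + 1 := Nat.exists_eq_add_one.mpr (Nat.pos_of_ne_zero hn0)
  have hodd : Odd m := by simpa [Nat.even_add_one] using hn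
  rw [Nat.add_sub_cancel, hodd.neg_pow, mul_neg, ← pow_succ', hε, neg_neg]

lemma cexp_mul_I_pow_eq_neg_one {n : ℕ} {m : ℤ} (hm : Odd m) {θ : ℂ}
    (hθ : n * θ = m * π) : cexp (θ * I) ^ n = -1 := by
  rw [← Complex.exp_nat_mul, ← mul_assoc, hθ, mul_assoc, Complex.exp_int_mul,
    Complex.exp_pi_mul_I, hm.neg_one_zpow]

lemma cexp_sub_mul_cos_mul_sin (A u θ : ℂ) :
    cexp (A - u * Complex.cos θ) * Complex.sin (u * Complex.sin θ - θ)
      = (cexp (-θ * I) * cexp (A - u * cexp (-θ * I))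
          - cexp (θ * I) * cexp (A - u * cexp (θ * I))) / (2 * I) := by
  have h₁ : cexp (A - u * Complex.cos θ) * cexp ((u * Complex.sin θ - θ) * I)
      = cexp (-θ * I) * cexp (A - u * cexp (-θ * I)) := by
    rw [← Complex.exp_add, ← Complex.exp_add, Complex.exp_mul_I, Complex.cos_neg,
      Complex.sin_neg]
    congr 1
    ring
  have h₂ : cexp (A - u * Complex.cos θ) * cexp (-(u * Complex.sin θ - θ) * I)
      = cexp (θ * I) * cexp (A - u * cexp (θ * I)) := by
    rw [← Complex.exp_add, ← Complex.exp_add, Complex.exp_mul_I]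
    congr 1
    ring
  rw [← h₁, ← h₂, Complex.sin]
  field_simp
  ring_nf
  simp only [Complex.I_sq]
  ring

noncomputable def airyKernel (n : ℕ) (α : ℝ) (β x : ℂ) (w : ℝ) : ℂ :=
  cexp (-(α * (w : ℂ) ^ n / n) - β * w * x)

noncomputable def airyMoment (n : ℕ) (α : ℝ) (β : ℂ) (j : ℕ) (x : ℂ) : ℂ :=
  ∫ w in Ioi (0 : ℝ), (w : ℂ) ^ j * airyKernel n α β x w

section

variable {n : ℕ} {α : ℝ} {β : ℂ}

lemma continuous_airyKernel (x : ℂ) : Continuous (airyKernel n α β x) := by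
  unfold airyKernel; fun_prop

lemma norm_airyKernel_le (x : ℂ) {w : ℝ} (hw : 0 ≤ w) :
    ‖airyKernel n α β x w‖ ≤ exp (-(α / n * w ^ n) + ‖β‖ * ‖x‖ * w) := by
  have h : -(α * (w : ℂ) ^ n / n) - β * w * x = ((-(α / n * w ^ n) : ℝ) : ℂ) - w * (β * x) := by
    push_cast; ring
  have hre := neg_le_of_abs_le (Complex.abs_re_le_norm (β * x))
  rw [norm_mul] at hre
  rw [airyKernel, Complex.norm_exp, h, Complex.sub_re, Complex.ofReal_re, Complex.re_ofReal_mul]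
  gcongr
  linarith [mul_le_mul_of_nonneg_left hre hw]

/-- `w ^ j ≤ j! eʷ` and `wⁿ ≥ w² - 1` dominate the moments by a Gaussian, uniformly in `‖x‖ ≤ r`. -/
lemma norm_pow_mul_airyKernel_le (hn : 2 ≤ n) (hα : 0 ≤ α) (j : ℕ) {x : ℂ} {r : ℝ}
    (hx : ‖x‖ ≤ r) {w : ℝ} (hw : 0 ≤ w) :
    ‖(w : ℂ) ^ j * airyKernel n α β x w‖
      ≤ j.factorial * exp (α / n) * exp (-(α / n) * w ^ 2 + (‖β‖ * r + 1) * w) := by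
  have hpow : w ^ j ≤ j.factorial * exp w := by
    have := pow_div_factorial_le_exp w hw j
    rwa [div_le_iff₀ (by positivity), mul_comm] at this
  have hquad : -(α / n * w ^ n) ≤ α / n - α / n * w ^ 2 := by
    have := mul_le_mul_of_nonneg_left (sq_le_one_add_pow hn hw) (by positivity : 0 ≤ α / n)
    linarith
  have hlin : ‖β‖ * ‖x‖ * w ≤ ‖β‖ * r * w := by gcongr
  rw [norm_mul, norm_pow, Complex.norm_real, norm_of_nonneg hw]
  calc w ^ j * ‖airyKernel n α β x w‖
      ≤ (j.factorial * exp w) * exp (-(α / n * w ^ n) + ‖β‖ * ‖x‖ * w) := by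
        gcongr
        exact norm_airyKernel_le x hw
    _ ≤ (j.factorial * exp w) * exp (α / n - α / n * w ^ 2 + ‖β‖ * r * w) := by
        gcongr
    _ = _ := by
        simp only [mul_assoc, ← exp_add]
        ring_nf

lemma integrable_factorial_mul_exp_bound (hn : 2 ≤ n) (hα : 0 < α) (j : ℕ) (b : ℝ) :
    Integrable fun w : ℝ => j.factorial * exp (α / n) * exp (-(α / n) * w ^ 2 + b * w) :=
  (integrable_exp_neg_mul_sq_add_mul (div_pos hα (by norm_cast; omega)) b).const_mul _

lemma integrableOn_pow_mul_airyKernel (hn : 2 ≤ n) (hα : 0 < α) (j : ℕ) (x : ℂ) :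
    IntegrableOn (fun w : ℝ => (w : ℂ) ^ j * airyKernel n α β x w) (Ioi 0) := by
  refine (integrable_factorial_mul_exp_bound hn hα j (‖β‖ * ‖x‖ + 1)).integrableOn.mono'
    ((Complex.continuous_ofReal.pow j).mul (continuous_airyKernel x)).aestronglyMeasurable ?_
  filter_upwards [ae_restrict_mem measurableSet_Ioi] with w hw
  exact norm_pow_mul_airyKernel_le hn hα.le j le_rfl hw.le

lemma hasDerivAt_airyKernel_param (x : ℂ) (w : ℝ) :
    HasDerivAt (airyKernel n α β · w) (-β * w * airyKernel n α β x w) x := by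
  have := ((hasDerivAt_id x).const_mul (β * w)).const_sub (-(α * (w : ℂ) ^ n / n)) |>.cexp
  exact this.congr_deriv (by simp only [airyKernel, id]; ring)

lemma hasDerivAt_airyKernel (hn : n ≠ 0) (x : ℂ) (w : ℝ) :
    HasDerivAt (airyKernel n α β x)
      (-(α * (w : ℂ) ^ (n - 1) + β * x) * airyKernel n α β x w) w := by
  have hpow := ((hasDerivAt_pow n (w : ℂ)).const_mul (α : ℂ)).div_const (n : ℂ)
  have := ((hpow.fun_neg.fun_sub ((hasDerivAt_id (w : ℂ)).mul_const (β * x))).cexp).comp_ofReal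
  refine this.congr_deriv ?_ |>.congr_of_eventuallyEq (Eventually.of_forall fun v => ?_)
  · have : (n : ℂ) ≠ 0 := by exact_mod_cast hn
    simp only [airyKernel, id]
    field_simp
    ring
  · simp only [airyKernel, id]
    ring_nf

lemma hasDerivAt_airyMoment (hn : 2 ≤ n) (hα : 0 < α) (j : ℕ) (x₀ : ℂ) :
    HasDerivAt (airyMoment n α β j) (-β * airyMoment n α β (j + 1) x₀) x₀ := by
  have key := hasDerivAt_integral_of_dominated_loc_of_deriv_le
    (μ := volume.restrict (Ioi 0)) (Metric.ball_mem_nhds x₀ one_pos)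
    (F := fun x (w : ℝ) => (w : ℂ) ^ j * airyKernel n α β x w)
    (F' := fun x (w : ℝ) => -β * ((w : ℂ) ^ (j + 1) * airyKernel n α β x w))
    (bound := fun w => ‖β‖ * ((j + 1).factorial * exp (α / n) *
      exp (-(α / n) * w ^ 2 + (‖β‖ * (‖x₀‖ + 1) + 1) * w)))
    (Eventually.of_forall fun x =>
      (integrableOn_pow_mul_airyKernel hn hα j x).aestronglyMeasurable)
    (integrableOn_pow_mul_airyKernel hn hα j x₀)
    ((integrableOn_pow_mul_airyKernel hn hα (j + 1) x₀).const_mul _).aestronglyMeasurable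
    ?_ ((integrable_factorial_mul_exp_bound hn hα (j + 1) _).const_mul _).integrableOn
    (ae_of_all _ fun w x _ =>
      ((hasDerivAt_airyKernel_param x w).const_mul ((w : ℂ) ^ j)).congr_deriv (by ring))
  · rw [airyMoment, ← integral_const_mul]
    exact key.2
  · filter_upwards [ae_restrict_mem measurableSet_Ioi] with w hw x hx
    have hx : ‖x‖ ≤ ‖x₀‖ + 1 := by
      have := norm_le_norm_add_norm_sub' x x₀
      rw [mem_ball_iff_norm] at hx
      linarith
    rw [norm_mul, norm_neg]
    gcongr
    exact norm_pow_mul_airyKernel_le hn hα.le _ hx hw.le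

/-- Integrate the exact derivative `-∂_w K = (α w^{n-1} + βx) K` over `(0, ∞)`, using `K(0) = 1`
and `K → 0` at infinity (as `K` and its derivative are integrable). -/
lemma mul_airyMoment_sub_one_add_mul_airyMoment_zero (hn : 2 ≤ n) (hα : 0 < α) (x : ℂ) :
    α * airyMoment n α β (n - 1) x + β * x * airyMoment n α β 0 x = 1 := by
  have hderiv (w : ℝ) : HasDerivAt (fun w => -airyKernel n α β x w)
      ((α * (w : ℂ) ^ (n - 1) + β * x) * airyKernel n α β x w) w :=
    (hasDerivAt_airyKernel (by omega) x w).fun_neg.congr_deriv (by ring)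
  have hint : IntegrableOn
      (fun w : ℝ => (α * (w : ℂ) ^ (n - 1) + β * x) * airyKernel n α β x w) (Ioi 0) := by
    refine (((integrableOn_pow_mul_airyKernel hn hα (n - 1) x).const_mul α).add
      ((integrableOn_pow_mul_airyKernel hn hα 0 x).const_mul (β * x))).congr
      (ae_of_all _ fun w => by simp only [Pi.add_apply]; ring)
  have hlim : Tendsto (fun w => -airyKernel n α β x w) atTop (𝓝 0) :=
    tendsto_zero_of_hasDerivAt_of_integrableOn_Ioi (a := 0) (fun w _ => hderiv w) hint
      (by simpa using (integrableOn_pow_mul_airyKernel hn hα 0 x).neg)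
  have hftc := integral_Ioi_of_hasDerivAt_of_tendsto
    (continuous_airyKernel x).neg.continuousWithinAt (fun w _ => hderiv w) hint hlim
  have hE0 : airyKernel n α β x 0 = 1 := by
    simp [airyKernel, zero_pow (by omega : n ≠ 0)]
  rw [Pi.neg_apply, hE0, zero_sub, neg_neg] at hftc
  rw [← hftc, airyMoment, airyMoment, ← integral_const_mul,
    ← integral_const_mul, ← integral_add]
  · exact setIntegral_congr_fun measurableSet_Ioi fun w _ => by ring
  · exact (integrableOn_pow_mul_airyKernel hn hα (n - 1) x).const_mul _
  · exact (integrableOn_pow_mul_airyKernel hn hα 0 x).const_mul _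

lemma iteratedDeriv_airyMoment (hn : 2 ≤ n) (hα : 0 < α) (j : ℕ) :
    iteratedDeriv j (airyMoment n α β 0) = fun x => (-β) ^ j * airyMoment n α β j x := by
  induction j with
  | zero => ext; simp
  | succ j ih =>
    ext x
    rw [iteratedDeriv_succ, ih, ((hasDerivAt_airyMoment hn hα j x).const_mul _).deriv]
    ring

lemma mul_iteratedDeriv_sub_one_airyMoment (hn : 2 ≤ n) (hα : 0 < α) (x : ℂ) :
    α * iteratedDeriv (n - 1) (airyMoment n α β 0) x
      = (-β) ^ (n - 1) * (1 - β * x * airyMoment n α β 0 x) := by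
  rw [iteratedDeriv_airyMoment hn hα,
    ← mul_airyMoment_sub_one_add_mul_airyMoment_zero (β := β) hn hα x]
  ring

lemma differentiable_airyMoment (hn : 2 ≤ n) (hα : 0 < α) (j : ℕ) :
    Differentiable ℂ (airyMoment n α β j) :=
  fun x => (hasDerivAt_airyMoment hn hα j x).differentiableAt

end

lemma iteratedDeriv_mul_airyMoment_add {n : ℕ} (hn : 2 ≤ n) (hne : Even n) {c : ℝ} (hc : 0 < c)
    {ε : ℂ} (hε : ε ^ n = -1) (x : ℂ) :
    iteratedDeriv (n - 1) (fun x => ε * airyMoment n (c ^ (n - 1)) (c * ε) 0 x) x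
      + c * x * (ε * airyMoment n (c ^ (n - 1)) (c * ε) 0 x) = 1 := by
  have hM := mul_iteratedDeriv_sub_one_airyMoment (β := c * ε) hn (pow_pos hc (n - 1)) x
  have hcn : (c : ℂ) ^ (n - 1) ≠ 0 := pow_ne_zero _ (by exact_mod_cast hc.ne')
  have hunit := mul_neg_pow_sub_one_of_pow_eq_neg_one hne hε
  rw [iteratedDeriv_const_mul_field]
  apply mul_left_cancel₀ hcn
  push_cast at hM
  linear_combination ε * hM
    + (c : ℂ) ^ (n - 1) * (1 - c * ε * x * airyMoment n (c ^ (n - 1)) (c * ε) 0 x) * hunit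

lemma neg_integral_cexp_mul_sin_eq {n : ℕ} (hn : 2 ≤ n) {c : ℝ} (hc : 0 < c) (θ : ℝ) (x : ℂ) :
    -∫ w in Ioi (0 : ℝ), cexp (-(c : ℂ) ^ (n - 1) * (w : ℂ) ^ n / n - c * w * x * Complex.cos θ)
        * Complex.sin (c * w * x * Complex.sin θ - θ)
      = (cexp (θ * I) * airyMoment n (c ^ (n - 1)) (c * cexp (θ * I)) 0 x
          - cexp (-θ * I) * airyMoment n (c ^ (n - 1)) (c * cexp (-θ * I)) 0 x) / (2 * I) := by
  have hint (ε : ℂ) :=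
    integrableOn_pow_mul_airyKernel (β := c * ε) hn (pow_pos hc (n - 1)) 0 x
  have hK (ε : ℂ) (w : ℝ) : cexp (-(c : ℂ) ^ (n - 1) * (w : ℂ) ^ n / n - c * w * x * ε)
      = airyKernel n (c ^ (n - 1)) (c * ε) x w := by
    rw [airyKernel]; push_cast; ring_nf
  simp only [cexp_sub_mul_cos_mul_sin]
  simp only [hK, airyMoment, pow_zero, one_mul] at hint ⊢
  rw [integral_div, integral_sub ((hint _).const_mul _) ((hint _).const_mul _),
    integral_const_mul, integral_const_mul]
  ring

theorem airy_type_ode_y_minus_even_general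
    (n : ℕ) (hn : 2 ≤ n) (hne : Even n) (c : ℝ) (hc : 0 < c)
    (k : ℕ)
    (y : ℂ → ℂ)
    (hy : ∀ x : ℂ, y x =
      -∫ w in Ioi (0 : ℝ),
        Complex.exp (-(c : ℂ) ^ (n - 1) * (w : ℂ) ^ n / n
            - (c : ℂ) * w * x * (Real.cos ((2 * k + 1) * π / n) : ℝ)) *
          Complex.sin ((c : ℂ) * w * x * (Real.sin ((2 * k + 1) * π / n) : ℝ)
            - ((2 * k + 1) * π / n : ℝ))) :
    ∀ x : ℂ, iteratedDeriv (n - 1) y x + (c : ℂ) * x * y x = 0 := by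
  set θ : ℝ := (2 * k + 1) * π / n with hθ
  have hnθ : (n : ℂ) * θ = (2 * k + 1 : ℤ) * π := by
    have : (n : ℂ) ≠ 0 := by exact_mod_cast (show n ≠ 0 by omega)
    rw [hθ]; push_cast; field_simp
  have hε₁ : cexp (θ * I) ^ n = -1 := cexp_mul_I_pow_eq_neg_one ⟨k, by ring⟩ hnθ
  have hε₂ : cexp (-θ * I) ^ n = -1 := by
    rw [neg_mul, Complex.exp_neg, inv_pow, hε₁, inv_neg, inv_one]
  set H : ℂ → ℂ → ℂ := fun ε x => ε * airyMoment n (c ^ (n - 1)) (c * ε) 0 x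
  have hH (ε : ℂ) : ContDiff ℂ (n - 1) (H ε) :=
    ((differentiable_airyMoment hn (pow_pos hc _) 0).const_mul ε).contDiff
  have hyH : y = fun x => (H (cexp (θ * I)) x - H (cexp (-θ * I)) x) / (2 * I) := by
    ext x
    rw [hy, ← neg_integral_cexp_mul_sin_eq hn hc θ x, Complex.ofReal_cos, Complex.ofReal_sin]
  intro x
  rw [hyH, iteratedDeriv_div_const, iteratedDeriv_fun_sub (hH _).contDiffAt (hH _).contDiffAt]
  linear_combination (iteratedDeriv_mul_airyMoment_add hn hne hc hε₁ x
    - iteratedDeriv_mul_airyMoment_add hn hne hc hε₂ x) / (2 * I)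

theorem airy_type_ode_y_minus_even
    (n : ℕ) (hn : 2 ≤ n) (hne : Even n) (c : ℝ) (hc : 0 < c)
    (k : ℕ) (hk2 : k ≤ n / 2 - 1)
    (y : ℂ → ℂ)
    (hy : ∀ x : ℂ, y x =
      -∫ w in Ioi (0 : ℝ),
        Complex.exp (-(c : ℂ) ^ (n - 1) * (w : ℂ) ^ n / n
            - (c : ℂ) * w * x * (Real.cos ((2 * k + 1) * π / n) : ℝ)) *
          Complex.sin ((c : ℂ) * w * x * (Real.sin ((2 * k + 1) * π / n) : ℝ)
            - ((2 * k + 1) * π / n : ℝ))) :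
    ∀ x : ℂ, iteratedDeriv (n - 1) y x + (c : ℂ) * x * y x = 0 :=
  airy_type_ode_y_minus_even_general n hn hne c hc k y hy
end

section
/- Let n ≥ 2 be an integer and c a nonzero real number, with n odd or (n even and c < 0), and let k be a natural number with 1 ≤ k ≤ ⌊n/2⌋. Then for every x ∈ ℂ, ∫₀^∞ e^{-(-c)^{n-1} w^n/n} ( e^{-c w x} - e^{-c w x a_k} cos(c w x b_k - 2kπ/n) ) dw = Σ_{j=0}^∞ (-sgn(c)·x)^j / j! · ( 1 - cos((j+1)·2kπ/n) ) · Γ((j+1)/n) · (n|c|)^{(j+1)/n - 1}, and the series converges for all x ∈ ℂ. -/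
/-!
The bracket is an entire function of `w`: writing `1 - cos ((j + 1) θ)` through
`e^{± i (j + 1) θ}` and summing two exponential series shows that it equals
`∑ⱼ (-c x)ʲ / j! * (1 - cos ((j + 1) θ)) * wʲ`. The parity condition gives
`(-c)^(n-1) = |c|^(n-1)`, so the weight is `exp (-b wⁿ)` with `b = |c|^(n-1) / n > 0`.
Since `n ≥ 2`, `exp (r w - b wⁿ)` is integrable on `(0, ∞)` for every `r`, which dominates the
series and allows termwise integration. Each moment
`∫ wʲ exp (-b wⁿ) = b^(-(j+1)/n) Γ((j+1)/n) / n` is a Gamma value, and `c = sgn c * |c|`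
puts the result in the stated form.
-/

open MeasureTheory Real Set
open scoped Nat

namespace Complex

theorem hasSum_pow_div_factorial_mul_exp_succ_mul (u z : ℂ) :
    HasSum (fun j : ℕ => u ^ j / j ! * exp ((j + 1) * z)) (exp (u * exp z + z)) := by
  have h := (NormedSpace.expSeries_div_hasSum_exp (u * exp z)).mul_right (exp z)
  rw [← exp_eq_exp_ℂ, ← exp_add] at h
  refine h.congr_fun fun j => ?_
  rw [add_mul, one_mul, exp_add, exp_nat_mul, mul_pow]
  ring

theorem hasSum_pow_div_factorial_mul_cos_succ_mul (u θ : ℂ) :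
    HasSum (fun j : ℕ => u ^ j / j ! * cos ((j + 1) * θ))
      (exp (u * cos θ) * cos (u * sin θ + θ)) := by
  have h := ((hasSum_pow_div_factorial_mul_exp_succ_mul u (θ * I)).add
    (hasSum_pow_div_factorial_mul_exp_succ_mul u (-θ * I))).div_const 2
  have hcos (w : ℂ) : cos w = (exp (w * I) + exp (-w * I)) / 2 := rfl
  rw [exp_mul_I, neg_mul, ← neg_mul, exp_mul_I, cos_neg, sin_neg] at h
  have hval : exp (u * cos θ) * cos (u * sin θ + θ) =
      (exp (u * (cos θ + sin θ * I) + θ * I) +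
        exp (u * (cos θ + -sin θ * I) + -θ * I)) / 2 := by
    rw [hcos (u * sin θ + θ), mul_div_assoc', mul_add, ← exp_add, ← exp_add]
    congr 3 <;> ring
  rw [hval]
  refine h.congr_fun fun j => ?_
  rw [hcos]
  ring_nf

theorem hasSum_pow_div_factorial_mul_one_sub_cos_succ_mul (u θ : ℂ) :
    HasSum (fun j : ℕ => u ^ j / j ! * (1 - cos ((j + 1) * θ)))
      (exp u - exp (u * cos θ) * cos (u * sin θ + θ)) := by
  have h := (NormedSpace.expSeries_div_hasSum_exp u).sub
    (hasSum_pow_div_factorial_mul_cos_succ_mul u θ)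
  rw [← exp_eq_exp_ℂ] at h
  simpa only [mul_sub, mul_one] using h

theorem norm_pow_div_factorial_mul_one_sub_cos_le (u : ℂ) (j : ℕ) (t : ℝ) :
    ‖u ^ j / j ! * (1 - (Real.cos t : ℂ))‖ ≤ 2 * ‖u‖ ^ j / j ! := by
  have hcos : ‖(1 - (Real.cos t : ℂ))‖ ≤ 2 := by
    rw [← ofReal_one, ← ofReal_sub, norm_real, norm_eq_abs, abs_le]
    constructor <;> linarith [neg_one_le_cos t, cos_le_one t]
  rw [norm_mul, norm_div, norm_pow, norm_natCast, mul_comm 2, mul_div_right_comm]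
  gcongr

end Complex

theorem Real.sign_mul_abs (r : ℝ) : sign r * |r| = r := by
  rcases lt_trichotomy r 0 with h | rfl | h
  · rw [sign_of_neg h, abs_of_neg h]; ring
  · simp
  · rw [sign_of_pos h, abs_of_pos h]; ring

theorem integrableOn_exp_mul_sub_mul_pow (r : ℝ) {b : ℝ} (hb : 0 < b) {n : ℕ} (hn : 2 ≤ n) :
    IntegrableOn (fun w => exp (r * w - b * w ^ n)) (Ioi 0) := by
  have hdom : Integrable fun w : ℝ => exp (r ^ 2 / (2 * b) + b) * exp (-(b / 2) * w ^ 2) :=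
    (integrable_exp_neg_mul_sq (by positivity)).const_mul _
  refine hdom.integrableOn.mono' (by fun_prop : Continuous _).aestronglyMeasurable ?_
  filter_upwards [ae_restrict_mem measurableSet_Ioi] with w (hw : 0 < w)
  rw [norm_of_nonneg (exp_nonneg _), ← exp_add, exp_le_exp]
  have hpow : w ^ 2 - 1 ≤ w ^ n := by
    rcases le_total w 1 with h | h
    · nlinarith [pow_nonneg hw.le n, mul_le_mul h h hw.le zero_le_one]
    · linarith [pow_le_pow_right₀ h hn]
  -- `r w ≤ (b/2) w² + r²/(2b)` is AM-GM
  have hamgm : r * w ≤ b / 2 * w ^ 2 + r ^ 2 / (2 * b) := by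
    rw [div_mul_eq_mul_div, div_add_div _ _ (by norm_num) (by positivity),
      le_div_iff₀ (by positivity)]
    nlinarith [sq_nonneg (b * w - r)]
  nlinarith

theorem integral_pow_mul_exp_neg_mul_pow {b : ℝ} (hb : 0 < b) {n : ℕ} (hn : n ≠ 0) (j : ℕ) :
    ∫ w in Ioi (0 : ℝ), w ^ j * exp (-b * w ^ n) =
      b ^ (-(j + 1) / n : ℝ) * (1 / n) * Gamma ((j + 1) / n) := by
  simpa only [rpow_natCast] using integral_rpow_mul_exp_neg_mul_rpow (p := n) (q := j)
    (by positivity) (by linarith [(Nat.cast_nonneg j : (0 : ℝ) ≤ j)]) hb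

theorem hasSum_integral_mul_exp_neg_mul_pow {n : ℕ} (hn : 2 ≤ n) {b : ℝ} (hb : 0 < b)
    {a : ℕ → ℂ} {C r : ℝ} (ha : ∀ j, ‖a j‖ ≤ C * r ^ j / j !) {g : ℝ → ℂ}
    (hg : ∀ w : ℝ, 0 < w → HasSum (fun j => a j * (w : ℂ) ^ j) (g w)) :
    HasSum (fun j => a j * ((∫ w in Ioi (0 : ℝ), w ^ j * exp (-b * w ^ n) : ℝ) : ℂ))
      (∫ w in Ioi (0 : ℝ), (exp (-b * w ^ n) : ℂ) * g w) := by
  have hbound (w : ℝ) : HasSum (fun j => C * (r * w) ^ j / j ! * exp (-b * w ^ n))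
      (C * exp (r * w - b * w ^ n)) := by
    have h := ((NormedSpace.expSeries_div_hasSum_exp (r * w)).mul_left C).mul_right
      (exp (-b * w ^ n))
    rw [← exp_eq_exp_ℝ, mul_assoc, ← exp_add] at h
    rw [sub_eq_add_neg, ← neg_mul]
    exact h.congr_fun fun j => by ring
  have h := hasSum_integral_of_dominated_convergence (μ := volume.restrict (Ioi 0))
    (F := fun j w => a j * ((w ^ j * exp (-b * w ^ n) : ℝ) : ℂ))
    (f := fun w => (exp (-b * w ^ n) : ℂ) * g w)
    (fun j w => C * (r * w) ^ j / j ! * exp (-b * w ^ n))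
    (fun j => (by fun_prop : Continuous _).aestronglyMeasurable)
    (fun j => by
      filter_upwards [ae_restrict_mem measurableSet_Ioi] with w (hw : 0 < w)
      rw [norm_mul, Complex.norm_real, norm_of_nonneg (by positivity)]
      calc ‖a j‖ * (w ^ j * exp (-b * w ^ n))
          ≤ C * r ^ j / j ! * (w ^ j * exp (-b * w ^ n)) := by gcongr; exact ha j
        _ = C * (r * w) ^ j / j ! * exp (-b * w ^ n) := by ring)
    (ae_of_all _ fun w => (hbound w).summable)
    (by
      simp_rw [fun w => (hbound w).tsum_eq]
      exact (integrableOn_exp_mul_sub_mul_pow r hb hn).const_mul C)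
    (by
      filter_upwards [ae_restrict_mem measurableSet_Ioi] with w hw
      refine ((hg w hw).mul_left _).congr_fun fun j => ?_
      push_cast
      ring)
  simpa only [integral_const_mul, integral_complex_ofReal] using h

theorem pow_mul_rpow_neg_div_eq_rpow {A : ℝ} (hA : 0 < A) {n : ℕ} (hn : n ≠ 0) (j : ℕ) :
    A ^ j * ((A ^ (n - 1) / n) ^ (-(j + 1) / n : ℝ) * (1 / n)) =
      (n * A) ^ (((j : ℝ) + 1) / n - 1) := by
  have hn0 : (0 : ℝ) < n := by positivity
  apply log_injOn_pos (mem_Ioi.mpr (by positivity)) (mem_Ioi.mpr (by positivity))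
  rw [log_mul (by positivity) (by positivity), log_mul (by positivity) (by positivity), log_pow,
    log_rpow (by positivity), log_div (by positivity) hn0.ne', log_pow, one_div, log_inv,
    log_rpow (by positivity), log_mul hn0.ne' hA.ne', Nat.cast_sub (by omega), Nat.cast_one]
  field_simp
  ring

theorem neg_pow_sub_one_eq_abs_pow {n : ℕ} {c : ℝ} (h : Odd n ∨ (Even n ∧ c < 0)) :
    (-c) ^ (n - 1) = |c| ^ (n - 1) := by
  rcases h with hodd | ⟨-, hneg⟩
  · have heven : Even (n - 1) := Nat.Odd.sub_odd hodd odd_one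
    rw [heven.neg_pow, heven.pow_abs]
  · rw [abs_of_neg hneg]

theorem airy_type_power_series_y_plus_general
    (n : ℕ) (hn : 2 ≤ n) (c : ℝ) (hc : c ≠ 0)
    (hcase : Odd n ∨ (Even n ∧ c < 0))
    (k : ℕ) (x : ℂ) :
    HasSum
      (fun j : ℕ =>
        ((-(Real.sign c : ℂ)) * x) ^ j / (Nat.factorial j) *
          ((1 : ℂ) - (Real.cos (((j : ℝ) + 1) * (2 * k * π / n)) : ℝ)) *
          (Real.Gamma (((j : ℝ) + 1) / n) : ℝ) *
          ((((n : ℝ) * |c|) ^ (((j : ℝ) + 1) / n - 1) : ℝ) : ℂ))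
      (∫ w in Ioi (0 : ℝ),
        Complex.exp (-(-(c : ℂ)) ^ (n - 1) * (w : ℂ) ^ n / n) *
          (Complex.exp (-(c : ℂ) * w * x)
            - Complex.exp (-(c : ℂ) * w * x * (Real.cos (2 * k * π / n) : ℝ)) *
              Complex.cos ((c : ℂ) * w * x * (Real.sin (2 * k * π / n) : ℝ)
                - (2 * k * π / n : ℝ)))) := by
  set θ : ℝ := 2 * k * π / n
  have hn0 : n ≠ 0 := by omega
  have hc_abs : 0 < |c| := abs_pos.mpr hc
  have hb : 0 < |c| ^ (n - 1) / n := by positivity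
  have h := hasSum_integral_mul_exp_neg_mul_pow hn hb (C := 2) (r := ‖-(c : ℂ) * x‖)
    (a := fun j => (-(c : ℂ) * x) ^ j / j ! * (1 - (Real.cos ((j + 1) * θ) : ℂ)))
    (fun j => Complex.norm_pow_div_factorial_mul_one_sub_cos_le _ _ _)
    (fun w _ => by
      have := Complex.hasSum_pow_div_factorial_mul_one_sub_cos_succ_mul (-(c : ℂ) * w * x) θ
      rw [← Complex.cos_neg (_ * Complex.sin _ + _)] at this
      push_cast
      convert this using 2 with j
      ring_nf)
  have hsc : (c : ℂ) = (sign c : ℂ) * (|c| : ℝ) := by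
    exact_mod_cast (Real.sign_mul_abs c).symm
  convert h using 1
  · funext j
    rw [integral_pow_mul_exp_neg_mul_pow hb hn0, ← pow_mul_rpow_neg_div_eq_rpow hc_abs hn0 j, hsc]
    push_cast
    ring
  · refine setIntegral_congr_fun measurableSet_Ioi fun w _ => ?_
    rw [← Complex.ofReal_neg, ← Complex.ofReal_pow, neg_pow_sub_one_eq_abs_pow hcase]
    push_cast
    ring_nf

theorem airy_type_power_series_y_plus
    (n : ℕ) (hn : 2 ≤ n) (c : ℝ) (hc : c ≠ 0)
    (hcase : Odd n ∨ (Even n ∧ c < 0))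
    (k : ℕ) (hk1 : 1 ≤ k) (hk2 : k ≤ n / 2) (x : ℂ) :
    HasSum
      (fun j : ℕ =>
        ((-(Real.sign c : ℂ)) * x) ^ j / (Nat.factorial j) *
          ((1 : ℂ) - (Real.cos (((j : ℝ) + 1) * (2 * k * π / n)) : ℝ)) *
          (Real.Gamma (((j : ℝ) + 1) / n) : ℝ) *
          ((((n : ℝ) * |c|) ^ (((j : ℝ) + 1) / n - 1) : ℝ) : ℂ))
      (∫ w in Ioi (0 : ℝ),
        Complex.exp (-(-(c : ℂ)) ^ (n - 1) * (w : ℂ) ^ n / n) *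
          (Complex.exp (-(c : ℂ) * w * x)
            - Complex.exp (-(c : ℂ) * w * x * (Real.cos (2 * k * π / n) : ℝ)) *
              Complex.cos ((c : ℂ) * w * x * (Real.sin (2 * k * π / n) : ℝ)
                - (2 * k * π / n : ℝ)))) :=
  airy_type_power_series_y_plus_general n hn c hc hcase k x
end

section
/- Let n ≥ 2 be an integer and c a nonzero real number, with n odd or (n even and c < 0), and let k be a natural number with 1 ≤ k ≤ ⌊n/2⌋ such that c·cos(2kπ/n) ≥ 0. Define y(x) = -∫₀^∞ e^{-(-c)^{n-1} w^n/n - c w x a_k} sin(c w x b_k - 2kπ/n) dw for real x. Then ∫₀^∞ y(x) dx equals (n - 2k)π/(-nc) when c < 0, and equals 2kπ/(nc) when c > 0. -/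
/-!
Write θ = 2kπ/n, a = c cos θ ≥ 0, b = c sin θ and g(w) = exp(-(-c)^(n-1) w^n / n). The
x-integral is elementary, so by Fubini `∫₀^R y = c⁻¹ ∫₀^∞ g(w) e^{-aRw} sin(bRw) dw / w`.
Split g(w) = e^{-w} + w φ(w) with φ integrable on (0, ∞). The e^{-w} part is the Laplace
transform of sin(bRw)/w, namely arctan(bR / (1 + aR)) = arg(1 + aR + ibR), which tends to
arg(a + ib) = arg(c e^{iθ}), i.e. to θ or θ - π according to the sign of c. The φ part tends
to 0: by dominated convergence if a > 0, by the Riemann–Lebesgue lemma if a = 0.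
-/

open MeasureTheory Real Set Filter Topology
open scoped Interval FourierTransform

theorem norm_exp_neg_mul_sin_le_one {x : ℝ} (hx : 0 ≤ x) (y : ℝ) : ‖rexp (-x) * sin y‖ ≤ 1 := by
  rw [norm_mul, norm_of_nonneg (exp_pos _).le, ← one_mul 1]
  exact mul_le_mul (exp_le_one_iff.2 (neg_nonpos.2 hx)) (abs_sin_le_one y) (norm_nonneg _)
    zero_le_one

theorem integral_exp_neg_mul_mul_cos {p : ℝ} (hp : 0 < p) (t : ℝ) :
    ∫ w in Ioi (0 : ℝ), rexp (-p * w) * cos (t * w) = p / (p ^ 2 + t ^ 2) := by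
  have ha : (-p + t * Complex.I).re < 0 := by simpa using hp
  calc ∫ w in Ioi (0 : ℝ), rexp (-p * w) * cos (t * w)
      = ∫ w in Ioi (0 : ℝ), (Complex.exp ((-p + t * Complex.I) * w)).re := by
        congr 1; ext w; rw [Complex.exp_re]; simp
    _ = (∫ w in Ioi (0 : ℝ), Complex.exp ((-p + t * Complex.I) * w)).re :=
        integral_re (integrableOn_exp_mul_complex_Ioi ha 0)
    _ = p / (p ^ 2 + t ^ 2) := by
        rw [integral_exp_mul_complex_Ioi ha 0]
        simp [Complex.normSq_apply, ← sq, neg_div]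

theorem integral_cos_mul (q : ℝ) {w : ℝ} (hw : w ≠ 0) :
    ∫ t in (0 : ℝ)..q, cos (t * w) = sin (q * w) / w := by
  rw [intervalIntegral.integral_comp_mul_right cos hw, integral_cos]
  simp [div_eq_inv_mul]

theorem integral_exp_neg_mul_mul_sin_div {p : ℝ} (hp : 0 < p) (q : ℝ) :
    ∫ w in Ioi (0 : ℝ), rexp (-p * w) * sin (q * w) / w = arctan (q / p) := by
  have hint : Integrable (Function.uncurry fun w t => rexp (-p * w) * cos (t * w))
      ((volume.restrict (Ioi 0)).prod (volume.restrict (Ι 0 q))) := by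
    refine Integrable.mono' (g := fun z : ℝ × ℝ => rexp (-p * z.1) * 1)
      ((exp_neg_integrableOn_Ioi 0 hp).mul_prod (integrableOn_const measure_Ioc_lt_top.ne))
      (by fun_prop) (ae_of_all _ fun ⟨w, t⟩ => ?_)
    simpa [abs_mul] using mul_le_mul_of_nonneg_left (abs_cos_le_one (t * w)) (exp_pos (-p * w)).le
  calc ∫ w in Ioi (0 : ℝ), rexp (-p * w) * sin (q * w) / w
      = ∫ w in Ioi (0 : ℝ), ∫ t in (0 : ℝ)..q, rexp (-p * w) * cos (t * w) := by
        refine setIntegral_congr_fun measurableSet_Ioi fun w hw => ?_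
        rw [intervalIntegral.integral_const_mul, integral_cos_mul q (ne_of_gt hw), mul_div_assoc]
    _ = ∫ t in (0 : ℝ)..q, ∫ w in Ioi (0 : ℝ), rexp (-p * w) * cos (t * w) := by
        simp_rw [intervalIntegral.intervalIntegral_eq_integral_uIoc, integral_smul,
          integral_integral_swap hint]
    _ = arctan (q / p) := by
        simp_rw [integral_exp_neg_mul_mul_cos hp, integral_div_sq_add_sq]
        simp

theorem tendsto_integral_mul_sin_cocompact {φ : ℝ → ℝ} (hφ : Integrable φ) :
    Tendsto (fun s => ∫ v, φ v * sin (s * v)) (cocompact ℝ) (𝓝 0) := by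
  have hRL := (Complex.continuous_im.tendsto 0).comp <|
    (Real.tendsto_integral_exp_smul_cocompact fun v => (φ v : ℂ)).comp
      (tendsto_cocompact_mul_left₀ (neg_ne_zero.2 (inv_ne_zero two_pi_pos.ne')))
  rw [Complex.zero_im] at hRL
  refine hRL.congr fun s => ?_
  have hint : Integrable fun v : ℝ => 𝐞 (-(v * (-(2 * π)⁻¹ * s))) • (φ v : ℂ) :=
    hφ.ofReal.bdd_smul 1 (by fun_prop) (ae_of_all _ fun v => (Circle.norm_coe _).le)
  rw [Function.comp_apply, Function.comp_apply, ← RCLike.im_to_complex, ← integral_im hint]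
  congr 1; ext v
  rw [Circle.smul_def, Real.fourierChar_apply,
    show 2 * π * -(v * (-(2 * π)⁻¹ * s)) = s * v by field_simp, RCLike.im_to_complex,
    smul_eq_mul, Complex.mul_im, Complex.exp_ofReal_mul_I_im, Complex.ofReal_im,
    Complex.ofReal_re]
  ring

theorem tendsto_integral_mul_exp_mul_sin {φ : ℝ → ℝ} (hφ : IntegrableOn φ (Ioi 0)) {a : ℝ}
    (ha : 0 ≤ a) (b : ℝ) :
    Tendsto (fun R => ∫ w in Ioi 0, φ w * (rexp (-(a * R * w)) * sin (b * R * w))) atTop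
      (𝓝 0) := by
  rcases ha.lt_or_eq with ha | rfl
  · have hbound : ∀ᶠ R in atTop, ∀ᵐ w ∂volume.restrict (Ioi 0),
        ‖φ w * (rexp (-(a * R * w)) * sin (b * R * w))‖ ≤ ‖φ w‖ := by
      filter_upwards [eventually_ge_atTop 0] with R hR
      filter_upwards [ae_restrict_mem measurableSet_Ioi] with w (hw : 0 < w)
      rw [norm_mul]
      exact mul_le_of_le_one_right (norm_nonneg _)
        (norm_exp_neg_mul_sin_le_one (by positivity) _)
    have hlim : ∀ᵐ w ∂volume.restrict (Ioi 0),
        Tendsto (fun R => φ w * (rexp (-(a * R * w)) * sin (b * R * w))) atTop (𝓝 0) := by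
      filter_upwards [ae_restrict_mem measurableSet_Ioi] with w hw
      have hexp : Tendsto (fun R => rexp (-(a * R * w))) atTop (𝓝 0) :=
        tendsto_exp_atBot.comp <| tendsto_neg_atTop_atBot.comp <|
          (tendsto_id.const_mul_atTop ha).atTop_mul_const hw
      simpa using (hexp.zero_mul_isBoundedUnder_le
        (isBoundedUnder_of ⟨1, fun R => by simpa using abs_sin_le_one _⟩)).const_mul (φ w)
    simpa using tendsto_integral_filter_of_dominated_convergence _
      (Eventually.of_forall fun R => hφ.aestronglyMeasurable.mul (by fun_prop))
      hbound hφ.norm hlim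
  · rcases eq_or_ne b 0 with rfl | hb
    · simp
    have hφ' : Integrable ((Ioi 0).indicator φ) :=
      (integrable_indicator_iff measurableSet_Ioi).2 hφ
    refine ((tendsto_integral_mul_sin_cocompact hφ').comp ((tendsto_cocompact_mul_left₀ hb).comp
      (tendsto_id.mono_right atTop_le_cocompact))).congr fun R => ?_
    rw [Function.comp_apply, ← integral_indicator measurableSet_Ioi]
    congr 1; ext w
    by_cases hw : w ∈ Ioi 0 <;> simp [hw]

theorem arctan_div_eq_arg {p : ℝ} (hp : 0 < p) (q : ℝ) :
    arctan (q / p) = Complex.arg (p + q * Complex.I) := by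
  have hre : 0 < (p + q * Complex.I : ℂ).re := by simpa using hp
  obtain ⟨hlt, hgt⟩ := abs_lt.1 (Complex.abs_arg_lt_pi_div_two_iff.2 (Or.inl hre))
  rw [← arctan_tan hlt hgt, Complex.tan_arg]
  simp

theorem tendsto_arctan_mul_div_one_add_mul {a b : ℝ} (ha : 0 ≤ a) (hab : 0 < a ∨ b ≠ 0) :
    Tendsto (fun R => arctan (b * R / (1 + a * R))) atTop
      (𝓝 (Complex.arg (a + b * Complex.I))) := by
  have hz : (a + b * Complex.I : ℂ) ∈ Complex.slitPlane := by
    simpa [Complex.mem_slitPlane_iff] using hab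
  have hlim : Tendsto (fun R : ℝ => ((R⁻¹ : ℝ) : ℂ) + (a + b * Complex.I)) atTop
      (𝓝 (a + b * Complex.I)) := by
    simpa using ((Complex.continuous_ofReal.tendsto 0).comp tendsto_inv_atTop_zero).add_const
      (a + b * Complex.I : ℂ)
  refine ((Complex.continuousAt_arg hz).tendsto.comp hlim).congr' ?_
  filter_upwards [eventually_gt_atTop 0] with R hR
  rw [Function.comp_apply, arctan_div_eq_arg (by positivity), ← Complex.arg_real_mul _ hR]
  have hR' : (R : ℂ) ≠ 0 := Complex.ofReal_ne_zero.2 hR.ne'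
  congr 1
  push_cast
  field_simp
  ring

theorem tendsto_integral_mul_exp_mul_sin_div {g : ℝ → ℝ}
    (hg : IntegrableOn (fun w => (g w - rexp (-w)) / w) (Ioi 0)) {a b : ℝ} (ha : 0 ≤ a)
    (hab : 0 < a ∨ b ≠ 0) :
    Tendsto (fun R => ∫ w in Ioi 0, g w * (rexp (-(a * R * w)) * sin (b * R * w)) / w) atTop
      (𝓝 (Complex.arg (a + b * Complex.I))) := by
  have hlim := (tendsto_arctan_mul_div_one_add_mul ha hab).add
    (tendsto_integral_mul_exp_mul_sin hg ha b)
  rw [add_zero] at hlim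
  refine hlim.congr' ?_
  filter_upwards [eventually_ge_atTop 0] with R hR
  have hp : 0 < 1 + a * R := by positivity
  have hsplit : ∀ w, g w * (rexp (-(a * R * w)) * sin (b * R * w)) / w =
      rexp (-(1 + a * R) * w) * sin (b * R * w) / w +
        (g w - rexp (-w)) / w * (rexp (-(a * R * w)) * sin (b * R * w)) := by
    intro w
    rw [show -(1 + a * R) * w = -w + -(a * R * w) by ring, exp_add]
    field_simp
    ring
  have hint₁ : IntegrableOn (fun w => rexp (-(1 + a * R) * w) * sin (b * R * w) / w) (Ioi 0) := by
    simp_rw [mul_div_assoc]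
    refine (exp_neg_integrableOn_Ioi 0 hp).mul_bdd (c := |b * R|)
      (by fun_prop : Measurable _).aestronglyMeasurable
      (ae_restrict_of_forall_mem measurableSet_Ioi fun w (hw : 0 < w) => ?_)
    rw [norm_div, norm_of_nonneg hw.le, div_le_iff₀ hw]
    simpa [abs_mul, abs_of_pos hw] using abs_sin_le_abs (x := b * R * w)
  have hint₂ : IntegrableOn
      (fun w => (g w - rexp (-w)) / w * (rexp (-(a * R * w)) * sin (b * R * w))) (Ioi 0) :=
    hg.mul_bdd (by fun_prop) (ae_restrict_of_forall_mem measurableSet_Ioi fun w hw =>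
      norm_exp_neg_mul_sin_le_one (by have := hw.out; positivity) _)
  simp_rw [hsplit]
  rw [integral_add hint₁ hint₂, integral_exp_neg_mul_mul_sin_div hp]

theorem integrableOn_exp_neg_mul_pow {β : ℝ} (hβ : 0 < β) {n : ℕ} (hn : n ≠ 0) :
    IntegrableOn (fun w => rexp (-(β * w ^ n))) (Ioi 0) := by
  refine (integrableOn_rpow_mul_exp_neg_mul_rpow (s := 0) (p := n) neg_one_lt_zero
    (by positivity) hβ).congr_fun (fun w _ => ?_) measurableSet_Ioi
  simp [rpow_natCast]

theorem integrableOn_div_of_abs_le_mul {f : ℝ → ℝ} (hf : IntegrableOn f (Ioi 0)) {C : ℝ}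
    (hC : ∀ w ∈ Ioc (0 : ℝ) 1, |f w| ≤ C * w) : IntegrableOn (fun w => f w / w) (Ioi 0) := by
  have hmeas : AEStronglyMeasurable (fun w => f w / w) (volume.restrict (Ioi 0)) :=
    (hf.aemeasurable.div aemeasurable_id).aestronglyMeasurable
  rw [← Ioc_union_Ioi_eq_Ioi zero_le_one, integrableOn_union]
  constructor
  · refine Integrable.mono' (integrableOn_const (C := C) measure_Ioc_lt_top.ne)
      (hmeas.mono_set Ioc_subset_Ioi_self) ?_
    filter_upwards [ae_restrict_mem measurableSet_Ioc] with w hw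
    rw [norm_div, norm_of_nonneg hw.1.le, div_le_iff₀ hw.1]
    exact hC w hw
  · refine Integrable.mono' (hf.mono_set (Ioi_subset_Ioi zero_le_one)).norm
      (hmeas.mono_set (Ioi_subset_Ioi zero_le_one)) ?_
    filter_upwards [ae_restrict_mem measurableSet_Ioi] with w (hw : 1 < w)
    rw [norm_div]
    exact div_le_self (norm_nonneg _) (by simpa [abs_of_pos (zero_lt_one.trans hw)] using hw.le)

theorem integrableOn_exp_neg_mul_pow_sub_exp_neg_div {β : ℝ} (hβ : 0 < β) {n : ℕ} (hn : n ≠ 0) :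
    IntegrableOn (fun w => (rexp (-(β * w ^ n)) - rexp (-w)) / w) (Ioi 0) := by
  refine integrableOn_div_of_abs_le_mul ((integrableOn_exp_neg_mul_pow hβ hn).sub
    ((exp_neg_integrableOn_Ioi 0 zero_lt_one).congr_fun (fun w _ => by simp) measurableSet_Ioi))
    (C := β + 1) fun w hw => ?_
  have hpow : w ^ n ≤ w := pow_le_of_le_one hw.1.le hw.2 hn
  have h₁ := one_sub_le_exp_neg (β * w ^ n)
  have h₂ := one_sub_le_exp_neg w
  have h₃ : rexp (-(β * w ^ n)) ≤ 1 :=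
    exp_le_one_iff.2 (neg_nonpos.2 (mul_nonneg hβ.le (pow_nonneg hw.1.le n)))
  have h₄ : rexp (-w) ≤ 1 := exp_le_one_iff.2 (neg_nonpos.2 hw.1.le)
  have h₅ : β * w ^ n ≤ β * w := mul_le_mul_of_nonneg_left hpow hβ.le
  rw [abs_sub_le_iff]
  constructor <;> nlinarith

theorem integral_exp_neg_mul_mul_sin_sub {d : ℝ} (hd : d ≠ 0) (θ R : ℝ) :
    ∫ x in (0 : ℝ)..R, rexp (-(d * x * cos θ)) * sin (d * x * sin θ - θ) =
      -(rexp (-(d * R * cos θ)) * sin (d * R * sin θ)) / d := by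
  have hderiv (x : ℝ) : HasDerivAt (fun x => -(rexp (-(d * x * cos θ)) * sin (d * x * sin θ)) / d)
      (rexp (-(d * x * cos θ)) * sin (d * x * sin θ - θ)) x := by
    have hlin (u : ℝ) : HasDerivAt (fun x => d * x * u) (d * u) x := by
      simpa using ((hasDerivAt_id x).const_mul d).mul_const u
    refine (((hlin (cos θ)).neg.exp.mul (hlin (sin θ)).sin).neg.div_const d).congr_deriv ?_
    simp only [Pi.neg_apply, sin_sub]
    field_simp
    ring
  rw [intervalIntegral.integral_eq_sub_of_hasDerivAt (fun x _ => hderiv x)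
    (Continuous.intervalIntegrable (by fun_prop) _ _)]
  simp

theorem integral_Ioc_integral_Ioi_mul_exp_mul_sin_sub {g : ℝ → ℝ} (hg : IntegrableOn g (Ioi 0))
    {c θ R : ℝ} (hc : c ≠ 0) (hcθ : 0 ≤ c * cos θ) (hR : 0 ≤ R) :
    ∫ x in Ioc 0 R, ∫ w in Ioi 0,
        g w * (rexp (-(c * w * x * cos θ)) * sin (c * w * x * sin θ - θ)) =
      -c⁻¹ * ∫ w in Ioi 0, g w * (rexp (-(c * cos θ * R * w)) * sin (c * sin θ * R * w)) / w := by
  have hint : Integrable (Function.uncurry fun x w =>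
        g w * (rexp (-(c * w * x * cos θ)) * sin (c * w * x * sin θ - θ)))
      ((volume.restrict (Ioc 0 R)).prod (volume.restrict (Ioi 0))) := by
    have hone : Integrable (fun _ => (1 : ℝ)) (volume.restrict (Ioc 0 R)) :=
      integrableOn_const measure_Ioc_lt_top.ne
    refine Integrable.mono' (hone.mul_prod hg.norm)
      (hg.aestronglyMeasurable.comp_snd.mul (Continuous.aestronglyMeasurable (by fun_prop))) ?_
    rw [Measure.prod_restrict]
    filter_upwards [ae_restrict_mem (measurableSet_Ioc.prod measurableSet_Ioi)]
      with ⟨x, w⟩ ⟨hx, hw⟩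
    rw [Function.uncurry_apply_pair, norm_mul, one_mul]
    refine mul_le_of_le_one_right (norm_nonneg _) (norm_exp_neg_mul_sin_le_one ?_ _)
    have := mul_nonneg hcθ (mul_nonneg hw.out.le hx.1.le)
    linarith
  rw [integral_integral_swap hint, ← integral_const_mul]
  refine setIntegral_congr_fun measurableSet_Ioi fun w (hw : 0 < w) => ?_
  rw [integral_const_mul, ← intervalIntegral.integral_of_le hR,
    integral_exp_neg_mul_mul_sin_sub (mul_ne_zero hc hw.ne')]
  field_simp

theorem arg_mul_cos_add_mul_sin_mul_I {c θ : ℝ} (hc : c ≠ 0) (hθ : θ ∈ Ioc 0 π) :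
    Complex.arg (↑(c * cos θ) + ↑(c * sin θ) * Complex.I) = if c < 0 then θ - π else θ := by
  rcases hc.lt_or_gt with hc | hc
  · have hz : (↑(c * cos θ) + ↑(c * sin θ) * Complex.I : ℂ) =
        ↑(-c) * (Complex.cos ↑(θ - π) + Complex.sin ↑(θ - π) * Complex.I) := by
      push_cast
      rw [Complex.cos_sub_pi, Complex.sin_sub_pi]
      ring
    rw [if_pos hc, hz, Complex.arg_real_mul _ (neg_pos.2 hc),
      Complex.arg_cos_add_sin_mul_I ⟨by linarith [hθ.1], by linarith [hθ.2, pi_pos]⟩]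
  · have hz : (↑(c * cos θ) + ↑(c * sin θ) * Complex.I : ℂ) =
        ↑c * (Complex.cos ↑θ + Complex.sin ↑θ * Complex.I) := by
      push_cast
      ring
    rw [if_neg hc.not_gt, hz, Complex.arg_real_mul _ hc,
      Complex.arg_cos_add_sin_mul_I ⟨by linarith [hθ.1, pi_pos], hθ.2⟩]

theorem mul_cos_pos_or_mul_sin_ne_zero {c θ : ℝ} (hc : c ≠ 0) (hθ : θ ∈ Ioc 0 π)
    (hcθ : 0 ≤ c * cos θ) : 0 < c * cos θ ∨ c * sin θ ≠ 0 := by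
  rcases hθ.2.lt_or_eq with h | rfl
  · exact Or.inr (mul_ne_zero hc (sin_pos_of_pos_of_lt_pi hθ.1 h).ne')
  · rw [cos_pi, mul_neg_one] at hcθ ⊢
    exact Or.inl (hcθ.lt_of_ne (neg_ne_zero.2 hc).symm)

theorem two_mul_mul_pi_div_mem_Ioc {n k : ℕ} (hk1 : 1 ≤ k) (hk2 : k ≤ n / 2) :
    2 * k * π / n ∈ Ioc 0 π := by
  have hn0 : (0 : ℝ) < n := by exact_mod_cast (by omega : 0 < n)
  have h2k : (2 * k : ℝ) ≤ n := by exact_mod_cast (by omega : 2 * k ≤ n)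
  refine ⟨by positivity, ?_⟩
  rw [div_le_iff₀ hn0]
  nlinarith [pi_pos]

theorem neg_pow_sub_one_pos {n : ℕ} {c : ℝ} (hc : c ≠ 0) (hcase : Odd n ∨ (Even n ∧ c < 0)) :
    0 < (-c) ^ (n - 1) := by
  rcases hcase with hodd | ⟨-, hneg⟩
  · exact (Nat.Odd.sub_odd hodd odd_one).pow_pos (neg_ne_zero.2 hc)
  · exact pow_pos (neg_pos.2 hneg) _

theorem airy_type_integral_of_y_minus_general
    (n : ℕ) (c : ℝ) (hc : c ≠ 0)
    (hcase : Odd n ∨ (Even n ∧ c < 0))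
    (k : ℕ) (hk1 : 1 ≤ k) (hk2 : k ≤ n / 2)
    (hkc : 0 ≤ c * Real.cos (2 * k * π / n))
    (y : ℝ → ℝ)
    (hy : ∀ x : ℝ, y x =
      -∫ w in Ioi (0 : ℝ),
        Real.exp (-(-c) ^ (n - 1) * w ^ n / n - c * w * x * Real.cos (2 * k * π / n)) *
          Real.sin (c * w * x * Real.sin (2 * k * π / n) - 2 * k * π / n)) :
    Tendsto (fun R : ℝ => ∫ x in Ioc (0 : ℝ) R, y x) atTop
      (𝓝 (if c < 0 then ((n : ℝ) - 2 * k) * π / (-(n : ℝ) * c)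
        else 2 * k * π / ((n : ℝ) * c))) := by
  set θ : ℝ := 2 * k * π / n
  have hθ : θ ∈ Ioc 0 π := two_mul_mul_pi_div_mem_Ioc hk1 hk2
  have hn : n ≠ 0 := by omega
  have hβ : 0 < (-c) ^ (n - 1) / n :=
    div_pos (neg_pow_sub_one_pos hc hcase) (by positivity)
  set g : ℝ → ℝ := fun w => rexp (-((-c) ^ (n - 1) / n * w ^ n))
  have hy' (x : ℝ) : y x = -∫ w in Ioi 0,
      g w * (rexp (-(c * w * x * cos θ)) * sin (c * w * x * sin θ - θ)) := by
    rw [hy]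
    congr 2; ext w
    rw [← mul_assoc, ← exp_add]
    ring_nf
  have hlim := (tendsto_integral_mul_exp_mul_sin_div
    (integrableOn_exp_neg_mul_pow_sub_exp_neg_div hβ hn) hkc
    (mul_cos_pos_or_mul_sin_ne_zero hc hθ hkc)).const_mul c⁻¹
  rw [arg_mul_cos_add_mul_sin_mul_I hc hθ] at hlim
  convert hlim.congr' ?_ using 2
  · split_ifs
    · simp only [θ]; field_simp; ring
    · simp only [θ]; field_simp
  filter_upwards [eventually_ge_atTop 0] with R hR
  rw [setIntegral_congr_fun measurableSet_Ioc fun x _ => hy' x, integral_neg,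
    integral_Ioc_integral_Ioi_mul_exp_mul_sin_sub
      (integrableOn_exp_neg_mul_pow hβ hn) hc hkc hR]
  ring

theorem airy_type_integral_of_y_minus
    (n : ℕ) (hn : 2 ≤ n) (c : ℝ) (hc : c ≠ 0)
    (hcase : Odd n ∨ (Even n ∧ c < 0))
    (k : ℕ) (hk1 : 1 ≤ k) (hk2 : k ≤ n / 2)
    (hkc : 0 ≤ c * Real.cos (2 * k * π / n))
    (y : ℝ → ℝ)
    (hy : ∀ x : ℝ, y x =
      -∫ w in Ioi (0 : ℝ),
        Real.exp (-(-c) ^ (n - 1) * w ^ n / n - c * w * x * Real.cos (2 * k * π / n)) *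
          Real.sin (c * w * x * Real.sin (2 * k * π / n) - 2 * k * π / n)) :
    Tendsto (fun R : ℝ => ∫ x in Ioc (0 : ℝ) R, y x) atTop
      (𝓝 (if c < 0 then ((n : ℝ) - 2 * k) * π / (-(n : ℝ) * c)
        else 2 * k * π / ((n : ℝ) * c))) :=
  airy_type_integral_of_y_minus_general n c hc hcase k hk1 hk2 hkc y hy
end
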